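/- Let N ≥ 2 be an integer, ε > 0, α > 0, H > 0, H_y > 0, and set λ := 1 + αH/ε. Suppose a(i,j) ≥ α and b(i,j) ≥ 0 at all interior indices 1 ≤ i,j ≤ N−1, and define the upwind operator L^N Z(i,j) := −ε[(Z(i+1,j) − 2Z(i,j) + Z(i−1,j))/H² + (Z(i,j+1) − 2Z(i,j) + Z(i,j−1))/H_y²] + a(i,j)·(Z(i,j) − Z(i−1,j))/H + b(i,j)·Z(i,j). Then: (i) the mesh function E(i,j) := λ^{i−N} satisfies L^N E(i,j) ≥ 0 at every interior index; and (ii) if C₀ ≥ 0 and W is a mesh function with L^N W(i,j) = 0 at all interior indices and |W(i,j)| ≤ C₀·λ^{i−N} at all boundary indices (i ∈ {0,N} or j ∈ {0,N}), then |W(i,j)| ≤ C₀·λ^{i−N} at every index. -/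
import Mathlib


/-- The upwinded finite difference operator
`L^N Z = -ε(δ²_x + δ²_y)Z + a D⁻_x Z + b Z` on a uniform rectangular mesh. -/
noncomputable def LN2 (ε Hx Hy : ℝ) (a b Z : ℕ → ℕ → ℝ) (i j : ℕ) : ℝ :=
  -ε * ((Z (i+1) j - 2 * Z i j + Z (i-1) j) / Hx ^ 2 +
        (Z i (j+1) - 2 * Z i j + Z i (j-1)) / Hy ^ 2)
  + a i j * (Z i j - Z (i-1) j) / Hx + b i j * Z i j


lemma LN2_geom (ε Hx Hy t : ℝ) (hHx : Hx ≠ 0) (h1t : (0:ℝ) < 1 + t)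
    (a b : ℕ → ℕ → ℝ) (N i j : ℕ) (hi : 1 ≤ i) :
    LN2 ε Hx Hy a b (fun i' _ => (1 + t) ^ ((i' : ℤ) - (N : ℤ))) i j
      = (1 + t) ^ ((i : ℤ) - 1 - (N : ℤ)) *
        (t * (a i j * Hx - ε * t) / Hx ^ 2 + b i j * (1 + t)) := by
  have hne : (1 + t) ≠ 0 := ne_of_gt h1t
  have e1 : ((i + 1 : ℕ) : ℤ) - (N : ℤ) = ((i : ℤ) - 1 - (N : ℤ)) + 1 + 1 := by
    push_cast; ring
  have e2 : ((i : ℕ) : ℤ) - (N : ℤ) = ((i : ℤ) - 1 - (N : ℤ)) + 1 := by ring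
  have e3 : ((i - 1 : ℕ) : ℤ) - (N : ℤ) = (i : ℤ) - 1 - (N : ℤ) := by omega
  simp only [LN2, e1, e2, e3, zpow_add_one₀ hne]
  field_simp
  ring

lemma LN2_comb (ε Hx Hy : ℝ) (a b V G : ℕ → ℕ → ℝ) (c d : ℝ) (i j : ℕ) :
    LN2 ε Hx Hy a b (fun i' j' => c * V i' j' + d * G i' j') i j
      = c * LN2 ε Hx Hy a b V i j + d * LN2 ε Hx Hy a b G i j := by
  simp only [LN2]; ring

lemma arith_aux (ε H Hy aa bb A B C D M : ℝ) (hε : 0 < ε) (hH : 0 < H) (hHy : 0 < Hy)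
    (haa : 0 ≤ aa) (hbb : 0 ≤ bb) (hM : M ≤ 0)
    (hA : M ≤ A) (hB : M ≤ B) (hC : M ≤ C) (hD : M ≤ D) :
    -ε * ((A - 2 * M + B) / H ^ 2 + (C - 2 * M + D) / Hy ^ 2)
      + aa * (M - B) / H + bb * M ≤ 0 := by
  have k1 : 0 ≤ (A - 2 * M + B) / H ^ 2 := div_nonneg (by linarith) (by positivity)
  have k2 : 0 ≤ (C - 2 * M + D) / Hy ^ 2 := div_nonneg (by linarith) (by positivity)
  have k0 : 0 ≤ ε * ((A - 2 * M + B) / H ^ 2 + (C - 2 * M + D) / Hy ^ 2) :=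
    mul_nonneg (le_of_lt hε) (add_nonneg k1 k2)
  have k3 : aa * (M - B) / H ≤ 0 :=
    div_nonpos_of_nonpos_of_nonneg
      (mul_nonpos_of_nonneg_of_nonpos haa (by linarith)) (le_of_lt hH)
  have k4 : bb * M ≤ 0 := mul_nonpos_of_nonneg_of_nonpos hbb hM
  linarith

lemma minprin (N : ℕ) (hN : 2 ≤ N) (ε α H Hy : ℝ)
    (hε : 0 < ε) (hα : 0 < α) (hH : 0 < H) (hHy : 0 < Hy)
    (a b : ℕ → ℕ → ℝ)
    (ha : ∀ i j, 1 ≤ i → i ≤ N - 1 → 1 ≤ j → j ≤ N - 1 → α ≤ a i j)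
    (hb : ∀ i j, 1 ≤ i → i ≤ N - 1 → 1 ≤ j → j ≤ N - 1 → 0 ≤ b i j)
    (V : ℕ → ℕ → ℝ)
    (hint : ∀ i j, 1 ≤ i → i ≤ N - 1 → 1 ≤ j → j ≤ N - 1 → 0 ≤ LN2 ε H Hy a b V i j)
    (hbd : ∀ i j, i ≤ N → j ≤ N → (i = 0 ∨ i = N ∨ j = 0 ∨ j = N) → 0 ≤ V i j) :
    ∀ i j, i ≤ N → j ≤ N → 0 ≤ V i j := by
  set t : ℝ := α * H / (2 * ε) with htdef
  have ht : 0 < t := by positivity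
  have h1t : (0:ℝ) < 1 + t := by linarith
  set G : ℕ → ℕ → ℝ := fun i' _ => (1 + t) ^ ((i' : ℤ) - (N : ℤ)) with hGdef
  have hGpos : ∀ i j : ℕ, 0 < G i j := fun i j => zpow_pos h1t _
  have hGle : ∀ i j : ℕ, i ≤ N → G i j ≤ 1 := by
    intro i j hi
    exact zpow_le_one_of_nonpos₀ (by linarith) (by omega)
  have hLG : ∀ i j, 1 ≤ i → i ≤ N - 1 → 1 ≤ j → j ≤ N - 1 →
      0 < LN2 ε H Hy a b G i j := by
    intro i j hi1 hi2 hj1 hj2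
    rw [hGdef, LN2_geom ε H Hy t (ne_of_gt hH) h1t a b N i j hi1]
    have haij := ha i j hi1 hi2 hj1 hj2
    have hbij := hb i j hi1 hi2 hj1 hj2
    have hq : (0:ℝ) < (1 + t) ^ ((i : ℤ) - 1 - (N : ℤ)) := zpow_pos h1t _
    have het : ε * t = α * H / 2 := by rw [htdef]; field_simp
    have h1 : 0 < a i j * H - ε * t := by nlinarith
    have h2 : 0 < t * (a i j * H - ε * t) / H ^ 2 := by positivity
    have h3 : 0 ≤ b i j * (1 + t) := mul_nonneg hbij (le_of_lt h1t)
    nlinarith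
  -- perturbed positivity
  have key : ∀ δ : ℝ, 0 < δ → ∀ i j, i ≤ N → j ≤ N → 0 < V i j + δ * G i j := by
    intro δ hδ
    set Vδ : ℕ → ℕ → ℝ := fun i' j' => V i' j' + δ * G i' j' with hVδdef
    have hLVδ : ∀ i j, 1 ≤ i → i ≤ N - 1 → 1 ≤ j → j ≤ N - 1 →
        0 < LN2 ε H Hy a b Vδ i j := by
      intro i j hi1 hi2 hj1 hj2
      have : LN2 ε H Hy a b Vδ i j
          = 1 * LN2 ε H Hy a b V i j + δ * LN2 ε H Hy a b G i j := by
        rw [← LN2_comb]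
        simp [hVδdef]
      rw [this]
      have := hint i j hi1 hi2 hj1 hj2
      have := hLG i j hi1 hi2 hj1 hj2
      nlinarith
    obtain ⟨p, hpS, hpmin⟩ := Finset.exists_min_image
      ((Finset.range (N+1)) ×ˢ (Finset.range (N+1))) (fun p => Vδ p.1 p.2)
      ⟨(0,0), by simp⟩
    simp only [Finset.mem_product, Finset.mem_range] at hpS
    obtain ⟨hp1, hp2⟩ := hpS
    have hmin : ∀ i j : ℕ, i ≤ N → j ≤ N → Vδ p.1 p.2 ≤ Vδ i j := by
      intro i j hi hj
      exact hpmin (i, j) (by simp [Finset.mem_product]; omega)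
    suffices hpos : 0 < Vδ p.1 p.2 by
      intro i j hi hj
      exact lt_of_lt_of_le hpos (hmin i j hi hj)
    by_cases hbdy : p.1 = 0 ∨ p.1 = N ∨ p.2 = 0 ∨ p.2 = N
    · have := hbd p.1 p.2 (by omega) (by omega) hbdy
      have := hGpos p.1 p.2
      have : 0 < δ * G p.1 p.2 := by positivity
      simp only [hVδdef]
      linarith [hbd p.1 p.2 (by omega) (by omega) hbdy]
    · push_neg at hbdy
      have hi1 : 1 ≤ p.1 := by omega
      have hi2 : p.1 ≤ N - 1 := by omega
      have hj1 : 1 ≤ p.2 := by omega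
      have hj2 : p.2 ≤ N - 1 := by omega
      by_contra hm
      push_neg at hm
      have hA : Vδ p.1 p.2 ≤ Vδ (p.1 + 1) p.2 := hmin _ _ (by omega) (by omega)
      have hB : Vδ p.1 p.2 ≤ Vδ (p.1 - 1) p.2 := hmin _ _ (by omega) (by omega)
      have hC : Vδ p.1 p.2 ≤ Vδ p.1 (p.2 + 1) := hmin _ _ (by omega) (by omega)
      have hD : Vδ p.1 p.2 ≤ Vδ p.1 (p.2 - 1) := hmin _ _ (by omega) (by omega)
      have hpos := hLVδ p.1 p.2 hi1 hi2 hj1 hj2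
      have haij := ha p.1 p.2 hi1 hi2 hj1 hj2
      have hbij := hb p.1 p.2 hi1 hi2 hj1 hj2
      rw [LN2] at hpos
      have := arith_aux ε H Hy (a p.1 p.2) (b p.1 p.2)
        (Vδ (p.1+1) p.2) (Vδ (p.1-1) p.2) (Vδ p.1 (p.2+1)) (Vδ p.1 (p.2-1)) (Vδ p.1 p.2)
        hε hH hHy (by linarith) hbij hm hA hB hC hD
      exact absurd hpos (not_lt.mpr this)
  -- pass to the limit δ → 0
  intro i j hi hj
  by_contra hneg
  push_neg at hneg
  have hδ : 0 < -V i j / 2 := by linarith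
  have := key (-V i j / 2) hδ i j hi hj
  have hg1 := hGle i j hi
  have hg0 := hGpos i j
  nlinarith

/-- Discrete boundary-layer barrier `E(i,j) = λ^{i-N}`, `λ = 1 + αH/ε`:
(i) `L^N E ≥ 0` at interior indices; (ii) any discrete-harmonic `W` dominated
by `C₀λ^{i-N}` on the boundary is dominated by it everywhere. -/
theorem stmt5 (N : ℕ) (hN : 2 ≤ N) (ε α H Hy : ℝ)
    (hε : 0 < ε) (hα : 0 < α) (hH : 0 < H) (hHy : 0 < Hy)
    (a b : ℕ → ℕ → ℝ)
    (ha : ∀ i j, 1 ≤ i → i ≤ N - 1 → 1 ≤ j → j ≤ N - 1 → α ≤ a i j)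
    (hb : ∀ i j, 1 ≤ i → i ≤ N - 1 → 1 ≤ j → j ≤ N - 1 → 0 ≤ b i j) :
    (∀ i j, 1 ≤ i → i ≤ N - 1 → 1 ≤ j → j ≤ N - 1 →
      0 ≤ LN2 ε H Hy a b (fun i' _ => (1 + α * H / ε) ^ ((i' : ℤ) - (N : ℤ))) i j) ∧
    (∀ (C₀ : ℝ) (W : ℕ → ℕ → ℝ), 0 ≤ C₀ →
      (∀ i j, 1 ≤ i → i ≤ N - 1 → 1 ≤ j → j ≤ N - 1 → LN2 ε H Hy a b W i j = 0) →
      (∀ i j, i ≤ N → j ≤ N → (i = 0 ∨ i = N ∨ j = 0 ∨ j = N) →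
        |W i j| ≤ C₀ * (1 + α * H / ε) ^ ((i : ℤ) - (N : ℤ))) →
      ∀ i j, i ≤ N → j ≤ N →
        |W i j| ≤ C₀ * (1 + α * H / ε) ^ ((i : ℤ) - (N : ℤ))) := by
  have ht : 0 < α * H / ε := by positivity
  have h1t : (0:ℝ) < 1 + α * H / ε := by linarith
  have part1 : ∀ i j, 1 ≤ i → i ≤ N - 1 → 1 ≤ j → j ≤ N - 1 →
      0 ≤ LN2 ε H Hy a b (fun i' _ => (1 + α * H / ε) ^ ((i' : ℤ) - (N : ℤ))) i j := by
    intro i j hi1 hi2 hj1 hj2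
    rw [LN2_geom ε H Hy (α * H / ε) (ne_of_gt hH) h1t a b N i j hi1]
    have haij := ha i j hi1 hi2 hj1 hj2
    have hbij := hb i j hi1 hi2 hj1 hj2
    have hq : (0:ℝ) < (1 + α * H / ε) ^ ((i : ℤ) - 1 - (N : ℤ)) := zpow_pos h1t _
    have het : ε * (α * H / ε) = α * H := by field_simp
    have h1 : 0 ≤ a i j * H - ε * (α * H / ε) := by rw [het]; nlinarith
    have h2 : 0 ≤ α * H / ε * (a i j * H - ε * (α * H / ε)) / H ^ 2 := by positivity
    have h3 : 0 ≤ b i j * (1 + α * H / ε) := mul_nonneg hbij (le_of_lt h1t)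
    positivity
  refine ⟨part1, ?_⟩
  intro C₀ W hC₀ hLW habs
  set E : ℕ → ℕ → ℝ := fun i' _ => (1 + α * H / ε) ^ ((i' : ℤ) - (N : ℤ)) with hEdef
  have hcomb : ∀ (d : ℝ) i j, 1 ≤ i → i ≤ N - 1 → 1 ≤ j → j ≤ N - 1 →
      0 ≤ LN2 ε H Hy a b (fun i' j' => C₀ * E i' j' + d * W i' j') i j := by
    intro d i j hi1 hi2 hj1 hj2
    rw [LN2_comb]
    rw [hLW i j hi1 hi2 hj1 hj2]
    have := part1 i j hi1 hi2 hj1 hj2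
    simpa using mul_nonneg hC₀ this
  have hbdry : ∀ (d : ℝ), d = 1 ∨ d = -1 → ∀ i j, i ≤ N → j ≤ N →
      (i = 0 ∨ i = N ∨ j = 0 ∨ j = N) → 0 ≤ C₀ * E i j + d * W i j := by
    intro d hd i j hi hj hbdy
    have h := habs i j hi hj hbdy
    rw [abs_le] at h
    rcases hd with hd | hd <;> subst hd <;> simp only [hEdef] <;> linarith [h.1, h.2]
  have hplus := minprin N hN ε α H Hy hε hα hH hHy a b ha hb
    (fun i' j' => C₀ * E i' j' + 1 * W i' j') (hcomb 1) (hbdry 1 (Or.inl rfl))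
  have hminus := minprin N hN ε α H Hy hε hα hH hHy a b ha hb
    (fun i' j' => C₀ * E i' j' + (-1) * W i' j') (hcomb (-1)) (hbdry (-1) (Or.inr rfl))
  intro i j hi hj
  have h1 := hplus i j hi hj
  have h2 := hminus i j hi hj
  simp only [hEdef] at h1 h2
  rw [abs_le]
  constructor <;> linarith
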